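/- (Theorem 2) Let f : 𝕋 → ℝ be continuous, even, with mean value zero, with Fourier coefficients satisfying c₁·|k|^{−2} ≤ f̂(k) ≤ c₂·|k|^{−2} for all k ≠ 0 (for some constants c₂ ≥ c₁ > 0), and let (x_n)_{n≥1} be a greedy sequence for f with initial points x_1, …, x_M. Then there is a constant C > 0, depending only on c₁, c₂, f(0) and the initial points, such that sup_{x∈𝕋} |∑_{k=1}^{n} f(x − x_k)| ≤ C · n^{1/3} holds for infinitely many n. -/

import Mathlib

/-!
Write `g_n(y) = ∑_{k ≤ n} f(y - x_k)`, `S_n(k) = ∑_{j ≤ n} e(k x_j)` and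
`E_n = ∑_{i,j ≤ n} f(x_i - x_j) = ∑_k f̂(k) |S_n(k)|² ≥ 0`. As `f` is even,
`E_{n+1} = E_n + f(0) + 2 g_n(x_{n+1})`, and the greedy choice together with `∫ g_n = 0` gives
`g_n(x_{n+1}) = min g_n ≤ 0`. Hence `E_n = O(n)`, and since `E_n` stays nonnegative,
`min g_n ≥ -(f(0)/2 + 1)` for infinitely many `n`. For such `n`, `∫ |g_n|` is bounded, and so is
every Fourier coefficient `f̂(k) |S_n(k)|` of `g_n`. In `|g_n(y)| ≤ ∑_k f̂(k) |S_n(k)|` use this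
bound for `|k| ≤ n^{1/3}`, and `f̂(k) |S_n(k)| ≤ f̂(k) |S_n(k)|² / (2 n^{2/3}) + n^{2/3} f̂(k) / 2`
with `f̂(k) ≤ c₂ / k²` for the remaining `k`: each part is `O(n^{1/3})`.
-/

open MeasureTheory Filter AddCircle ComplexConjugate

section EnergyRecursion

variable {e m : ℕ → ℝ} {c : ℝ}

theorem le_add_mul_of_succ_eq_add (hrec : ∀ n, e (n + 1) = e n + c + 2 * m n) {M : ℕ}
    (hm : ∀ n, M ≤ n → m n ≤ 0) {n : ℕ} (hn : M ≤ n) : e n ≤ e M + (n - M) * c := by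
  induction n, hn using Nat.le_induction with
  | base => simp
  | succ n hn ih =>
    push_cast
    linarith [hrec n, hm n hn]

theorem frequently_neg_le_of_succ_eq_add (hrec : ∀ n, e (n + 1) = e n + c + 2 * m n)
    (he : ∀ n, 0 ≤ e n) : ∃ᶠ n in atTop, -(c / 2 + 1) ≤ m n := by
  rw [frequently_atTop]
  intro N
  by_contra! hm
  have hdecr (j : ℕ) : e (N + j) ≤ e N - 2 * j := by
    induction j with
    | zero => simp
    | succ j ih =>
      rw [← add_assoc, hrec]
      push_cast
      linarith [hm (N + j) (Nat.le_add_right N j)]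
  have hlast := hdecr (⌈e N⌉₊ + 1)
  push_cast at hlast
  linarith [he (N + (⌈e N⌉₊ + 1)), Nat.le_ceil (e N)]

end EnergyRecursion

theorem integral_abs_le_two_mul_of_neg_le {α : Type*} [MeasurableSpace α] {μ : Measure α}
    [IsProbabilityMeasure μ] {g : α → ℝ} {B : ℝ} (hg : Integrable g μ) (h0 : ∫ x, g x ∂μ = 0)
    (hB : ∀ x, -B ≤ g x) : ∫ x, |g x| ∂μ ≤ 2 * B := by
  have hB0 : -B ≤ ∫ x, g x ∂μ := by simpa using integral_mono (integrable_const (-B)) hg hB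
  have hle : ∫ x, |g x| ∂μ ≤ ∫ x, (g x + 2 * B) ∂μ :=
    integral_mono hg.abs (hg.add (integrable_const _)) fun x => by
      cases abs_cases (g x) <;> linarith [hB x]
  simpa [integral_add hg (integrable_const _), h0] using hle

theorem summable_nat_inv_sq_of_lt (H : ℕ) :
    Summable fun n : ℕ => if H < n then ((n : ℝ) ^ 2)⁻¹ else 0 := by
  refine .of_nonneg_of_le (fun k => by positivity) (fun k => ?_)
    (Real.summable_one_div_nat_pow.2 one_lt_two)
  split_ifs <;> simp

theorem tsum_nat_inv_sq_of_lt_le (H : ℕ) :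
    ∑' n : ℕ, (if H < n then ((n : ℝ) ^ 2)⁻¹ else 0) ≤ 2 / (H + 1) := by
  refine (summable_nat_inv_sq_of_lt H).tsum_le_of_sum_range_le fun m => ?_
  rw [← Finset.sum_filter]
  convert sum_Ioo_inv_sq_le (α := ℝ) H m using 2
  ext
  simp only [Finset.mem_filter, Finset.mem_range, Finset.mem_Ioo]
  omega

theorem summable_int_inv_sq_of_lt_abs (H : ℕ) :
    Summable fun k : ℤ => if (H : ℤ) < |k| then ((k : ℝ) ^ 2)⁻¹ else 0 := by
  refine .of_nonneg_of_le (fun k => by positivity) (fun k => ?_)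
    (Real.summable_one_div_int_pow.2 one_lt_two)
  split_ifs <;> simp [sq_nonneg]

theorem tsum_int_inv_sq_of_lt_abs_le (H : ℕ) :
    ∑' k : ℤ, (if (H : ℤ) < |k| then ((k : ℝ) ^ 2)⁻¹ else 0) ≤ 4 / (H + 1) := by
  set v : ℕ → ℝ := fun n => if H < n then ((n : ℝ) ^ 2)⁻¹ else 0
  have hv : HasSum v (∑' n, v n) := (summable_nat_inv_sq_of_lt H).hasSum
  have hneg (n : ℕ) : (if (H : ℤ) < |(-(n + 1) : ℤ)| then (((-(n + 1) : ℤ) : ℝ) ^ 2)⁻¹ else 0)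
      = v (n + 1) := by
    have : |(-(n + 1 : ℤ))| = ((n + 1 : ℕ) : ℤ) := by rw [abs_neg]; norm_cast
    simp only [v, this, Nat.cast_lt]
    push_cast
    rw [neg_sq]
  have hsum := HasSum.of_nat_of_neg_add_one
    (f := fun k : ℤ => if (H : ℤ) < |k| then ((k : ℝ) ^ 2)⁻¹ else 0) (by simpa using hv)
    (by simp only [hneg]; exact (hasSum_nat_add_iff' 1).2 hv)
  rw [hsum.tsum_eq, Finset.sum_range_one]
  simp only [v, Nat.not_lt_zero, if_false, sub_zero]
  linarith [tsum_nat_inv_sq_of_lt_le H, show (4 : ℝ) / (H + 1) = 2 * (2 / (H + 1)) by ring]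

theorem summable_of_nonneg_of_le_div_sq {a : ℤ → ℝ} {c : ℝ} (ha : ∀ k, 0 ≤ a k)
    (hac : ∀ k, a k ≤ c / k ^ 2) : Summable a :=
  .of_nonneg_of_le ha hac (by
    simpa [div_eq_mul_inv] using (Real.summable_one_div_int_pow.2 one_lt_two).mul_left c)

theorem summable_mul_of_summable_mul_sq {ι : Type*} {a s : ι → ℝ} (ha : ∀ k, 0 ≤ a k)
    (hs : ∀ k, 0 ≤ s k) (hsa : Summable a) (has : Summable fun k => a k * s k ^ 2) :
    Summable fun k => a k * s k :=
  .of_nonneg_of_le (fun k => mul_nonneg (ha k) (hs k))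
    (fun k => by nlinarith [ha k, mul_nonneg (ha k) (sq_nonneg (s k - 1))]) (hsa.add has)

theorem tsum_mul_le_rpow_one_third {a s : ℤ → ℝ} {A c E K t : ℝ}
    (ha : ∀ k, 0 ≤ a k) (hs : ∀ k, 0 ≤ s k) (hac : ∀ k, a k ≤ c / k ^ 2)
    (hA : ∀ k, a k * s k ≤ A) (hE : HasSum (fun k => a k * s k ^ 2) E) (hEK : E ≤ K * t)
    (ht : 1 ≤ t) :
    ∑' k, a k * s k ≤ (5 * A + K / 2 + 2 * c) * t ^ (1 / 3 : ℝ) := by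
  set r := t ^ (1 / 3 : ℝ)
  have hr : 1 ≤ r := Real.one_le_rpow ht (by norm_num)
  have hrt : r ^ 3 = t := by
    rw [← Real.rpow_natCast, ← Real.rpow_mul (by linarith)]; norm_num
  have hc : 0 ≤ c := by simpa using (ha 1).trans (hac 1)
  have hA0 : 0 ≤ A := (mul_nonneg (ha 0) (hs 0)).trans (hA 0)
  set H := ⌈r⌉₊
  have hrH : r ≤ H := Nat.le_ceil r
  have hHr : (H : ℝ) < r + 1 := Nat.ceil_lt_add_one (by linarith)
  set I := Finset.Icc (-(H : ℤ)) H
  set w : ℤ → ℝ := fun k => if (H : ℤ) < |k| then ((k : ℝ) ^ 2)⁻¹ else 0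
  -- Below the cutoff `|k| ≤ H ≈ t^{1/3}` use `hA`; above it, AM-GM with weight `r² = t^{2/3}`.
  have hsplit (k : ℤ) : a k * s k ≤
      (if k ∈ I then A else 0) + a k * s k ^ 2 / (2 * r ^ 2) + r ^ 2 / 2 * c * w k := by
    have hmem : k ∈ I ↔ ¬ (H : ℤ) < |k| := by simp [I, abs_le]
    by_cases hk : k ∈ I
    · simp only [hk, if_true, w, hmem.1 hk, if_false, mul_zero, add_zero]
      linarith [hA k, show 0 ≤ a k * s k ^ 2 / (2 * r ^ 2) by have := ha k; positivity]
    · have hak : a k ≤ c * w k := by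
        simpa [w, not_not.1 (mt hmem.2 hk), div_eq_mul_inv] using hac k
      have hamgm : a k * s k ≤ a k * s k ^ 2 / (2 * r ^ 2) + r ^ 2 / 2 * a k := by
        rw [div_add' _ _ _ (by positivity), le_div_iff₀ (by positivity)]
        nlinarith [mul_nonneg (ha k) (sq_nonneg (s k - r ^ 2))]
      simp only [hk, if_false, zero_add]
      nlinarith [mul_le_mul_of_nonneg_left hak (by positivity : (0 : ℝ) ≤ r ^ 2 / 2)]
  have hsum := hasSum_le hsplit
    (summable_mul_of_summable_mul_sq ha hs (summable_of_nonneg_of_le_div_sq ha hac)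
      hE.summable).hasSum
    (((hasSum_sum_of_ne_finset_zero (s := I) (fun k hk => if_neg hk)).add
      (hE.div_const _)).add ((summable_int_inv_sq_of_lt_abs H).hasSum.mul_left (r ^ 2 / 2 * c)))
  have hcard : ∑ k ∈ I, (if k ∈ I then A else 0) ≤ 5 * A * r := by
    rw [Finset.sum_congr rfl fun k hk => if_pos hk, Finset.sum_const, nsmul_eq_mul, Int.card_Icc,
      show ((H : ℤ) + 1 - -(H : ℤ)).toNat = 2 * H + 1 by omega]
    push_cast
    nlinarith
  have hlow : E / (2 * r ^ 2) ≤ K / 2 * r := by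
    rw [div_le_iff₀ (by positivity)]
    linarith [show K / 2 * r * (2 * r ^ 2) = K * t by rw [← hrt]; ring]
  have hhigh : r ^ 2 / 2 * c * ∑' k, w k ≤ 2 * c * r := by
    have hw : ∑' k, w k ≤ 4 / r :=
      (tsum_int_inv_sq_of_lt_abs_le H).trans
        (div_le_div_of_nonneg_left (by norm_num) (by linarith) (by linarith))
    calc r ^ 2 / 2 * c * ∑' k, w k ≤ r ^ 2 / 2 * c * (4 / r) := by gcongr
      _ = 2 * c * r := by field_simp; ring
  linarith

section Fourier

variable {T : ℝ}

theorem fourier_apply_add (k : ℤ) (x y : AddCircle T) :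
    fourier k (x + y) = fourier k x * fourier k y := by
  simp_rw [fourier_apply, smul_add, toCircle_add, Circle.coe_mul]

theorem fourier_apply_sub (k : ℤ) (x y : AddCircle T) :
    fourier k (x - y) = fourier k x * conj (fourier k y) := by
  rw [sub_eq_add_neg, fourier_apply_add, fourier_apply (x := -y), smul_neg, fourier_neg']

theorem norm_sum_fourier_le {ι : Type*} (s : Finset ι) (x : ι → AddCircle T) (k : ℤ) :
    ‖∑ j ∈ s, fourier k (x j)‖ ≤ s.card :=
  (norm_sum_le _ _).trans_eq (by simp [Circle.norm_coe])

variable [Fact (0 < T)] {E : Type*} [NormedAddCommGroup E] [NormedSpace ℂ E]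

theorem fourierCoeff_comp_sub (F : AddCircle T → E) (c : AddCircle T) (k : ℤ) :
    fourierCoeff (fun t => F (t - c)) k = fourier (-k) c • fourierCoeff F k := by
  rw [fourierCoeff, ← integral_add_right_eq_self (fun t => fourier (-k) t • F (t - c)) c]
  simp_rw [add_sub_cancel_right, fourier_apply_add, mul_comm _ (fourier (-k) c : ℂ), mul_smul]
  exact integral_smul _ _

theorem fourierCoeff_sum_comp_sub {ι : Type*} (s : Finset ι) (x : ι → AddCircle T)
    {F : AddCircle T → E} (hF : Integrable F haarAddCircle) (k : ℤ) :
    fourierCoeff (fun y => ∑ j ∈ s, F (y - x j)) k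
      = conj (∑ j ∈ s, fourier k (x j)) • fourierCoeff F k := by
  rw [show (fun y => ∑ j ∈ s, F (y - x j)) = ∑ j ∈ s, fun y => F (y - x j) by ext; simp,
    fourierCoeff.sum _ _ fun j _ => hF.comp_sub_right _]
  simp_rw [Finset.sum_apply, fourierCoeff_comp_sub, map_sum, fourier_neg, Finset.sum_smul]

theorem fourierCoeff_neg_of_even {F : AddCircle T → E} (hF : ∀ t, F (-t) = F t) (k : ℤ) :
    fourierCoeff F (-k) = fourierCoeff F k := by
  rw [fourierCoeff, ← integral_neg_eq_self _ haarAddCircle]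
  simp_rw [hF, neg_neg, fourier_apply, smul_neg, ← neg_smul]
  rfl

theorem conj_fourierCoeff_ofReal (f : AddCircle T → ℝ) (k : ℤ) :
    conj (fourierCoeff (fun t => (f t : ℂ)) k) = fourierCoeff (fun t => (f t : ℂ)) (-k) := by
  simp_rw [fourierCoeff, ← integral_conj, smul_eq_mul, map_mul, Complex.conj_ofReal,
    ← fourier_neg]

theorem fourierCoeff_ofReal_eq_re {f : AddCircle T → ℝ} (hf : ∀ t, f (-t) = f t) (k : ℤ) :
    fourierCoeff (fun t => (f t : ℂ)) k = (fourierCoeff (fun t => (f t : ℂ)) k).re :=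
  (Complex.conj_eq_iff_re.1 <| (conj_fourierCoeff_ofReal f k).trans <|
    fourierCoeff_neg_of_even (by simp [hf]) k).symm

theorem norm_fourierCoeff_le (F : AddCircle T → E) (k : ℤ) :
    ‖fourierCoeff F k‖ ≤ ∫ t, ‖F t‖ ∂haarAddCircle :=
  (norm_integral_le_integral_norm _).trans_eq (by simp [norm_smul, Circle.norm_coe])

theorem hasSum_sum_comp_sub {F : C(AddCircle T, ℂ)} (hF : Summable (fourierCoeff F))
    {ι : Type*} (s : Finset ι) (x : ι → AddCircle T) (y : AddCircle T) :
    HasSum (fun k => fourierCoeff F k * fourier k y * conj (∑ j ∈ s, fourier k (x j)))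
      (∑ j ∈ s, F (y - x j)) := by
  convert hasSum_sum fun j _ => has_pointwise_sum_fourier_series_of_summable hF (y - x j) with k
  simp_rw [map_sum, Finset.mul_sum, fourier_apply_sub, smul_eq_mul, mul_assoc]

theorem norm_sum_comp_sub_le_tsum {F : C(AddCircle T, ℂ)}
    (hF : Summable fun k => ‖fourierCoeff F k‖) {ι : Type*} (s : Finset ι)
    (x : ι → AddCircle T) (y : AddCircle T) :
    ‖∑ j ∈ s, F (y - x j)‖ ≤ ∑' k, ‖fourierCoeff F k‖ * ‖∑ j ∈ s, fourier k (x j)‖ := by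
  have hnorm (k : ℤ) : ‖fourierCoeff F k * fourier k y * conj (∑ j ∈ s, fourier k (x j))‖
      = ‖fourierCoeff F k‖ * ‖∑ j ∈ s, fourier k (x j)‖ := by
    rw [norm_mul, norm_mul, RCLike.norm_conj, fourier_apply, Circle.norm_coe, mul_one]
  rw [← (hasSum_sum_comp_sub hF.of_norm s x y).tsum_eq]
  refine (norm_tsum_le_tsum_norm ?_).trans_eq (by simp_rw [hnorm])
  simp_rw [hnorm]
  exact .of_nonneg_of_le (fun k => by positivity)
    (fun k => mul_le_mul_of_nonneg_left (norm_sum_fourier_le s x k) (norm_nonneg _))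
    (hF.mul_right (s.card : ℝ))

theorem hasSum_fourierCoeff_mul_norm_sq {F : C(AddCircle T, ℂ)} (hF : Summable (fourierCoeff F))
    {ι : Type*} (s : Finset ι) (x : ι → AddCircle T) :
    HasSum (fun k => fourierCoeff F k * ‖∑ j ∈ s, fourier k (x j)‖ ^ 2)
      (∑ i ∈ s, ∑ j ∈ s, F (x i - x j)) := by
  convert hasSum_sum fun i _ => hasSum_sum_comp_sub hF s x (x i) with k
  rw [← Finset.sum_mul, ← Finset.mul_sum, mul_assoc, RCLike.mul_conj]
  rfl

end Fourier

section Greedy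

variable {G : Type*} [AddCommGroup G] (f : G → ℝ) (x : ℕ → G)

def potential (n : ℕ) (y : G) : ℝ := ∑ k ∈ Finset.Icc 1 n, f (y - x k)

def energy (n : ℕ) : ℝ := ∑ i ∈ Finset.Icc 1 n, potential f x n (x i)

variable {f}

theorem energy_succ (hf : ∀ t, f (-t) = f t) (n : ℕ) :
    energy f x (n + 1) = energy f x n + f 0 + 2 * potential f x n (x (n + 1)) := by
  have hswap : ∑ i ∈ Finset.Icc 1 n, f (x i - x (n + 1)) = potential f x n (x (n + 1)) :=
    Finset.sum_congr rfl fun i _ => by rw [← hf, neg_sub]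
  simp only [energy, potential, Finset.sum_Icc_succ_top (Nat.le_add_left 1 n), sub_self,
    Finset.sum_add_distrib] at hswap ⊢
  rw [hswap]
  ring

theorem frequently_potential_ge_and_energy_le (hf : ∀ t, f (-t) = f t) (M : ℕ)
    (hgreedy : ∀ n, M < n → ∀ y, potential f x (n - 1) (x n) ≤ potential f x (n - 1) y)
    (hnonpos : ∀ n, ∃ y, potential f x n y ≤ 0) (henergy : ∀ n, 0 ≤ energy f x n) :
    ∃ B > 0, ∃ K ≥ 0, ∃ᶠ n in atTop,
      1 ≤ n ∧ (∀ y, -B ≤ potential f x n y) ∧ energy f x n ≤ K * n := by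
  have hmin (n : ℕ) (hn : M ≤ n) (y : G) : potential f x n (x (n + 1)) ≤ potential f x n y :=
    hgreedy (n + 1) (Nat.lt_succ_of_le hn) y
  have hm (n : ℕ) (hn : M ≤ n) : potential f x n (x (n + 1)) ≤ 0 := by
    obtain ⟨y, hy⟩ := hnonpos n
    exact (hmin n hn y).trans hy
  have hf0 : 0 ≤ f 0 := by simpa [energy, potential] using henergy 1
  refine ⟨f 0 / 2 + 1, by positivity, energy f x M + f 0, by linarith [henergy M], ?_⟩
  refine ((frequently_neg_le_of_succ_eq_add (energy_succ x hf) henergy).and_eventually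
    ((eventually_ge_atTop M).and (eventually_ge_atTop 1))).mono ?_
  rintro n ⟨hgood, hMn, hn⟩
  refine ⟨hn, fun y => hgood.trans (hmin n hMn y), ?_⟩
  have hlin := le_add_mul_of_succ_eq_add (energy_succ x hf) hm hMn
  have hn1 : (1 : ℝ) ≤ n := by exact_mod_cast hn
  nlinarith [henergy M, (Nat.cast_nonneg M : (0 : ℝ) ≤ M)]

end Greedy

section GreedyOnCircle

variable {T : ℝ} [Fact (0 < T)] {f : AddCircle T → ℝ} (x : ℕ → AddCircle T)

theorem integrable_potential (hf : Continuous f) (n : ℕ) :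
    Integrable (potential f x n) haarAddCircle :=
  (continuous_finsetSum _ fun _ _ => by fun_prop).integrable_of_hasCompactSupport
    (.of_compactSpace _)

theorem integral_potential (hf : Continuous f) (hmean : ∫ t, f t ∂haarAddCircle = 0) (n : ℕ) :
    ∫ y, potential f x n y ∂haarAddCircle = 0 := by
  unfold potential
  rw [integral_finsetSum _ fun j _ =>
    (hf.integrable_of_hasCompactSupport (.of_compactSpace _)).comp_sub_right _]
  simp [integral_sub_right_eq_self, hmean]

theorem exists_potential_nonpos (hf : Continuous f) (hmean : ∫ t, f t ∂haarAddCircle = 0)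
    (n : ℕ) : ∃ y, potential f x n y ≤ 0 :=
  integral_potential x hf hmean n ▸ exists_le_integral (integrable_potential x hf n)

variable {a : ℤ → ℝ}

theorem hasSum_energy (hf : Continuous f)
    (hfa : ∀ k, fourierCoeff (fun t => (f t : ℂ)) k = a k) (ha : Summable a) (n : ℕ) :
    HasSum (fun k => a k * ‖∑ j ∈ Finset.Icc 1 n, fourier k (x j)‖ ^ 2) (energy f x n) := by
  have hF := hasSum_fourierCoeff_mul_norm_sq (F := ⟨fun t => (f t : ℂ), by fun_prop⟩)
    ((Complex.summable_ofReal.2 ha).congr fun k => (hfa k).symm) (Finset.Icc 1 n) x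
  simp only [ContinuousMap.coe_mk, hfa] at hF
  exact_mod_cast hF

theorem abs_potential_le_rpow (hf : Continuous f) (hmean : ∫ t, f t ∂haarAddCircle = 0) {c : ℝ}
    (hfa : ∀ k, fourierCoeff (fun t => (f t : ℂ)) k = a k) (ha : ∀ k, 0 ≤ a k)
    (hac : ∀ k, a k ≤ c / k ^ 2) {n : ℕ} (hn : 1 ≤ n) {B K : ℝ}
    (hB : ∀ y, -B ≤ potential f x n y) (hK : energy f x n ≤ K * n) (y : AddCircle T) :
    |potential f x n y| ≤ (10 * B + K / 2 + 2 * c) * (n : ℝ) ^ (1 / 3 : ℝ) := by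
  set F : C(AddCircle T, ℂ) := ⟨fun t => (f t : ℂ), by fun_prop⟩
  have hnorm (k : ℤ) : ‖fourierCoeff F k‖ = a k := by
    simp [F, hfa, abs_of_nonneg (ha k)]
  have hsum : Summable a := summable_of_nonneg_of_le_div_sq ha hac
  have hpot (z : AddCircle T) : (potential f x n z : ℂ) = ∑ j ∈ Finset.Icc 1 n, F (z - x j) := by
    simp [potential, F]
  have hcoeff (k : ℤ) : a k * ‖∑ j ∈ Finset.Icc 1 n, fourier k (x j)‖ ≤ 2 * B := by
    have hle := norm_fourierCoeff_le (fun z => (potential f x n z : ℂ)) k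
    simp_rw [hpot, fourierCoeff_sum_comp_sub _ _ (F.continuous.integrable_of_hasCompactSupport
      (.of_compactSpace _)), norm_smul, RCLike.norm_conj, hnorm, ← hpot, Complex.norm_real,
      Real.norm_eq_abs] at hle
    linarith [integral_abs_le_two_mul_of_neg_le (integrable_potential x hf n)
      (integral_potential x hf hmean n) hB]
  calc |potential f x n y| = ‖∑ j ∈ Finset.Icc 1 n, F (y - x j)‖ := by
        rw [← hpot, Complex.norm_real, Real.norm_eq_abs]
    _ ≤ ∑' k, a k * ‖∑ j ∈ Finset.Icc 1 n, fourier k (x j)‖ := by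
        simpa only [hnorm] using
          norm_sum_comp_sub_le_tsum (F := F) (by simpa only [hnorm] using hsum) _ x y
    _ ≤ _ := (tsum_mul_le_rpow_one_third ha (fun _ => norm_nonneg _) hac hcoeff
        (hasSum_energy x hf hfa hsum n) hK (by exact_mod_cast hn)).trans_eq (by ring)

end GreedyOnCircle

theorem sup_le_cube_root_infinitely_often_general
    (f : UnitAddCircle → ℝ) (hf_cont : Continuous f)
    (hf_even : ∀ t : UnitAddCircle, f (-t) = f t)
    (hf_mean : (∫ t : UnitAddCircle, f t) = 0)
    (c₁ c₂ : ℝ) (hc₁ : 0 < c₁) (hc₁₂ : c₁ ≤ c₂)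
    (hf_lb : ∀ k : ℤ, k ≠ 0 → c₁ / (k : ℝ) ^ 2 ≤ (fourierCoeff (fun t => (f t : ℂ)) k).re)
    (hf_ub : ∀ k : ℤ, k ≠ 0 → (fourierCoeff (fun t => (f t : ℂ)) k).re ≤ c₂ / (k : ℝ) ^ 2)
    (M : ℕ) (x : ℕ → UnitAddCircle)
    (hgreedy : ∀ n : ℕ, M < n → ∀ y : UnitAddCircle,
      ∑ k ∈ Finset.Icc 1 (n - 1), f (x n - x k) ≤ ∑ k ∈ Finset.Icc 1 (n - 1), f (y - x k)) :
    ∃ C > 0, ∃ᶠ n in atTop, ∀ y : UnitAddCircle,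
      |∑ k ∈ Finset.Icc 1 n, f (y - x k)| ≤ C * (n : ℝ) ^ ((1:ℝ)/3) := by
  have hmean : ∫ t, f t ∂haarAddCircle = 0 := by
    simpa [volume_eq_smul_haarAddCircle] using hf_mean
  set a : ℤ → ℝ := fun k => (fourierCoeff (fun t => (f t : ℂ)) k).re
  have hfa : ∀ k, fourierCoeff (fun t => (f t : ℂ)) k = a k := fourierCoeff_ofReal_eq_re hf_even
  have ha0 : a 0 = 0 := by simp [a, fourierCoeff, integral_complex_ofReal, hmean]
  have ha (k : ℤ) : 0 ≤ a k := by
    rcases eq_or_ne k 0 with rfl | hk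
    · exact ha0.ge
    · exact (div_nonneg hc₁.le (sq_nonneg _)).trans (hf_lb k hk)
  have hac (k : ℤ) : a k ≤ c₂ / k ^ 2 := by
    rcases eq_or_ne k 0 with rfl | hk
    · simp [ha0]
    · exact hf_ub k hk
  obtain ⟨B, hB, K, hK, hfreq⟩ := frequently_potential_ge_and_energy_le x hf_even M hgreedy
    (exists_potential_nonpos x hf_cont hmean) fun n =>
      (hasSum_energy x hf_cont hfa (summable_of_nonneg_of_le_div_sq ha hac) n).nonneg
        fun k => mul_nonneg (ha k) (sq_nonneg _)
  refine ⟨10 * B + K / 2 + 2 * c₂, by linarith, hfreq.mono fun n ⟨hn, hgB, hgK⟩ y => ?_⟩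
  exact abs_potential_le_rpow x hf_cont hmean hfa ha hac hn hgB hgK y

/-- Theorem 2: For continuous even mean-zero `f : 𝕋 → ℝ` with
`c₁·|k|^{−2} ≤ f̂(k) ≤ c₂·|k|^{−2}` for `k ≠ 0`, and a greedy sequence `(x_n)` for `f`,
there is `C > 0` such that `sup_x |∑_{k=1}^{n} f(x − x_k)| ≤ C · n^{1/3}` holds for
infinitely many `n`. -/
theorem sup_le_cube_root_infinitely_often
    (f : UnitAddCircle → ℝ) (hf_cont : Continuous f)
    (hf_even : ∀ t : UnitAddCircle, f (-t) = f t)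
    (hf_mean : (∫ t : UnitAddCircle, f t) = 0)
    (c₁ c₂ : ℝ) (hc₁ : 0 < c₁) (hc₁₂ : c₁ ≤ c₂)
    (hf_lb : ∀ k : ℤ, k ≠ 0 → c₁ / (k : ℝ) ^ 2 ≤ (fourierCoeff (fun t => (f t : ℂ)) k).re)
    (hf_ub : ∀ k : ℤ, k ≠ 0 → (fourierCoeff (fun t => (f t : ℂ)) k).re ≤ c₂ / (k : ℝ) ^ 2)
    (M : ℕ) (hM : 1 ≤ M) (x : ℕ → UnitAddCircle)
    (hgreedy : ∀ n : ℕ, M < n → ∀ y : UnitAddCircle,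
      ∑ k ∈ Finset.Icc 1 (n - 1), f (x n - x k) ≤ ∑ k ∈ Finset.Icc 1 (n - 1), f (y - x k)) :
    ∃ C > 0, ∃ᶠ n in atTop, ∀ y : UnitAddCircle,
      |∑ k ∈ Finset.Icc 1 n, f (y - x k)| ≤ C * (n : ℝ) ^ ((1:ℝ)/3) :=
  sup_le_cube_root_infinitely_often_general f hf_cont hf_even hf_mean c₁ c₂ hc₁ hc₁₂ hf_lb hf_ub M x
    hgreedy
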